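/- arXiv:1609.05166 — 2 statements merged into one kernel-verified Lean document; each statement's English description precedes it below -/
import Mathlib

section
/- Let $X$ be a real random variable with conditional density with respect to a $\sigma$-algebra $\mathcal{G}$ bounded by $\tilde K$, let $X'$ be another random variable, and let $\eta > 0$, $h \in \mathbb{R}$. Then $E[|1_{\{X' < h\}} - 1_{\{X < h\}}| \mid \mathcal{G}] \le 2\tilde K \eta + E[|X - X'| \mid \mathcal{G}]/\eta$ almost surely. -/
open MeasureTheory

/-- Conditional small-window estimate: if `X` has a conditional density w.r.t. `𝒢`
bounded by `Ktil`, then for any `X'`, `η > 0` and threshold `h`,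
`E[|1_{X'<h} - 1_{X<h}| | 𝒢] ≤ 2 Ktil η + E[|X - X'| | 𝒢]/η` a.s. -/
theorem stmt12 {Ω : Type*} (𝒢 : MeasurableSpace Ω) {F : MeasurableSpace Ω} {μ : Measure Ω} [IsProbabilityMeasure μ]
    (h𝒢 : 𝒢 ≤ F)
    (X X' : Ω → ℝ) (hX : Measurable X) (hX' : Measurable X')
    (hint : Integrable (fun ω => X ω - X' ω) μ)
    (Ktil : ℝ) (hKtil : 0 ≤ Ktil)
    (hdens : ∀ s : Set ℝ, MeasurableSet s → volume s < ⊤ →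
      ∀ᵐ ω ∂μ,
        (μ[Set.indicator (X ⁻¹' s) (fun _ => (1 : ℝ)) | 𝒢]) ω ≤ Ktil * (volume s).toReal)
    (η : ℝ) (hη : 0 < η) (h : ℝ) :
    ∀ᵐ ω ∂μ,
      (μ[fun ω' => |(if X' ω' < h then (1 : ℝ) else 0) - (if X ω' < h then (1 : ℝ) else 0)|
          | 𝒢]) ω
        ≤ 2 * Ktil * η + (μ[fun ω' => |X ω' - X' ω'| | 𝒢]) ω / η := by
  set f : Ω → ℝ := fun ω' =>
    |(if X' ω' < h then (1 : ℝ) else 0) - (if X ω' < h then (1 : ℝ) else 0)| with hf_def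
  set s : Set ℝ := Set.Ioo (h - η) (h + η) with hs_def
  set g1 : Ω → ℝ := Set.indicator (X ⁻¹' s) (fun _ => (1 : ℝ)) with hg1_def
  set a : Ω → ℝ := fun ω' => |X ω' - X' ω'| with ha_def
  have hs_meas : MeasurableSet s := measurableSet_Ioo
  have hvol : (volume s).toReal = 2 * η := by
    rw [hs_def, Real.volume_Ioo, ENNReal.toReal_ofReal (by linarith)]
    ring
  have hvol_lt : volume s < ⊤ := by
    rw [hs_def, Real.volume_Ioo]; exact ENNReal.ofReal_lt_top
  -- pointwise: f ≤ g1 + η⁻¹ • a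
  have hpt : ∀ ω, f ω ≤ (g1 + η⁻¹ • a) ω := by
    intro ω
    simp only [Pi.add_apply, Pi.smul_apply, smul_eq_mul, hf_def, hg1_def, ha_def]
    have hg1nn : (0:ℝ) ≤ Set.indicator (X ⁻¹' s) (fun _ => (1:ℝ)) ω :=
      Set.indicator_nonneg (fun _ _ => zero_le_one) ω
    have hann : (0:ℝ) ≤ η⁻¹ * |X ω - X' ω| :=
      mul_nonneg (inv_nonneg.2 hη.le) (abs_nonneg _)
    have hkey : ∀ b c : ℝ, η ≤ b - c → 1 ≤ η⁻¹ * |b - c| := by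
      intro b c hbc
      rw [abs_of_nonneg (by linarith), ← div_eq_inv_mul]
      exact (one_le_div hη).2 hbc
    by_cases h1 : X' ω < h <;> by_cases h2 : X ω < h <;>
      simp only [h1, h2, if_true, if_false, sub_self, abs_zero, sub_zero, zero_sub, abs_neg,
        abs_one]
    · positivity
    · -- X' < h ≤ X
      by_cases h3 : X ω < h + η
      · have hmem : ω ∈ X ⁻¹' s := by
          simp only [hs_def, Set.mem_preimage, Set.mem_Ioo]
          constructor <;> linarith
        rw [Set.indicator_of_mem hmem]
        linarith
      · have := hkey (X ω) (X' ω) (by linarith)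
        linarith
    · -- X < h ≤ X'
      by_cases h3 : h - η < X ω
      · have hmem : ω ∈ X ⁻¹' s := by
          simp only [hs_def, Set.mem_preimage, Set.mem_Ioo]
          constructor <;> linarith
        rw [Set.indicator_of_mem hmem]
        linarith
      · have := hkey (X' ω) (X ω) (by linarith)
        rw [abs_sub_comm] at this
        linarith
    · positivity
  -- integrability
  have hXF : @Measurable Ω ℝ F _ X := hX
  have hf_measG : @Measurable Ω ℝ F _ f := by
    apply Measurable.abs
    exact ((measurable_const.ite (hX' measurableSet_Iio) measurable_const).sub
      (measurable_const.ite (hX measurableSet_Iio) measurable_const))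
  have hf_meas : @Measurable Ω ℝ F _ f := Measurable.mono hf_measG le_rfl le_rfl
  have hf_asm : @AEStronglyMeasurable Ω ℝ _ F F f μ := hf_meas.aestronglyMeasurable
  have hf_int : Integrable f μ := by
    refine Integrable.mono' ((integrable_const (2:ℝ)) : Integrable _ μ) hf_asm ?_
    filter_upwards with ω
    rw [hf_def]
    simp only []
    rw [Real.norm_eq_abs, abs_abs]
    have e1 : |(if X' ω < h then (1:ℝ) else 0)| ≤ 1 := by split <;> simp
    have e2 : |(if X ω < h then (1:ℝ) else 0)| ≤ 1 := by split <;> simp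
    calc |(if X' ω < h then (1:ℝ) else 0) - (if X ω < h then (1:ℝ) else 0)|
        ≤ |(if X' ω < h then (1:ℝ) else 0)| + |(if X ω < h then (1:ℝ) else 0)| := abs_sub _ _
      _ ≤ 1 + 1 := by gcongr
      _ = 2 := by norm_num
  have hg1_int : Integrable g1 μ := by
    rw [hg1_def]
    exact ((integrable_const (1:ℝ)) : Integrable _ μ).indicator (hXF hs_meas)
  have ha_int : Integrable a μ := hint.abs
  have hsa_int : Integrable (η⁻¹ • a) μ := ha_int.smul _
  -- monotonicity of conditional expectation
  have hmono := condExp_mono (m := 𝒢) (μ := μ) hf_int (hg1_int.add hsa_int)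
    (Filter.Eventually.of_forall hpt)
  have hadd := condExp_add (m := 𝒢) (μ := μ) hg1_int hsa_int
  have hsmul := condExp_smul (m := 𝒢) (μ := μ) (η⁻¹) a
  have hd := hdens s hs_meas hvol_lt
  filter_upwards [hmono, hadd, hsmul, hd] with ω h1 h2 h3 h4
  have : (μ[f|𝒢]) ω ≤ (μ[g1|𝒢]) ω + η⁻¹ * (μ[a|𝒢]) ω := by
    calc (μ[f|𝒢]) ω ≤ (μ[g1 + η⁻¹ • a|𝒢]) ω := h1
      _ = (μ[g1|𝒢]) ω + (μ[η⁻¹ • a|𝒢]) ω := by rw [h2]; rfl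
      _ = (μ[g1|𝒢]) ω + η⁻¹ * (μ[a|𝒢]) ω := by rw [h3]; rfl
  have hbd : (μ[g1|𝒢]) ω ≤ Ktil * (2 * η) := by rw [← hvol]; exact h4
  calc (μ[f|𝒢]) ω ≤ (μ[g1|𝒢]) ω + η⁻¹ * (μ[a|𝒢]) ω := this
    _ ≤ Ktil * (2 * η) + η⁻¹ * (μ[a|𝒢]) ω := by linarith
    _ = 2 * Ktil * η + (μ[a|𝒢]) ω / η := by ring
end

section
/- Let $F: \mathbb{R}^{\mathbb{Z}} \times \mathbb{R} \times \mathbb{R}^m \to \mathbb{R}^m$ satisfy $|F(w, s, z_1) - F(w, s, z_2)| \le \rho |z_1 - z_2|$ for all $w, s, z_1, z_2$, with $0 < \rho < 1$, and suppose there exist $x \in \mathbb{R}^m$ and $C > 0$ with $|F(\chi, s, x) - x| \le C(1 + |s|)$ for all $\chi, s$. Let $(\varepsilon_t^2)_{t \in \mathbb{Z}}$ be i.i.d. real random variables with $E|\varepsilon_0^2| < \infty$, let $(\chi_t)_{t \in \mathbb{Z}}$ be arbitrary (fixed) environment sequences, and define $\tilde X_0^t := x$, $\tilde X_{j+1}^t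 := F(\chi_t, \varepsilon_t^2, \cdot) \circ \cdots \circ F(\chi_{t-j}, \varepsilon_{t-j}^2, \cdot)(x)$. Then $\tilde X_j^t$ converges almost surely as $j \to \infty$. -/
/-!
By the contraction property the increments of the backward iteration decay geometrically:
`‖X̃_{j+1}^t - X̃_j^t‖ ≤ ρ^j ‖F(χ_{t-j}, ε_{t-j}, x) - x‖ ≤ ρ^j C (1 + |ε_{t-j}|)`.
The `ε_{t-j}` are identically distributed and integrable, so `∑ ρ^j |ε_{t-j}|` has finite
expectation and is therefore finite almost surely; the iterates are then a.s. Cauchy.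
-/

open MeasureTheory ProbabilityTheory Filter

open scoped ENNReal in
theorem ae_summable_geometric_mul_norm_of_identDistrib {Ω E : Type*} {_ : MeasurableSpace Ω}
    {μ : Measure Ω} [NormedAddCommGroup E] [NormedSpace ℝ E] [MeasurableSpace E] [BorelSpace E]
    {Y : ℕ → Ω → E} {Z : Ω → E} (hY : ∀ n, IdentDistrib (Y n) Z μ μ) (hZ : Integrable Z μ)
    {r : ℝ} (hr0 : 0 ≤ r) (hr1 : r < 1) :
    ∀ᵐ ω ∂μ, Summable fun n => r ^ n * ‖Y n ω‖ := by
  have hmeas n : AEStronglyMeasurable (r ^ n • Y n) μ :=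
    ((hY n).symm.aestronglyMeasurable_snd hZ.aestronglyMeasurable).const_smul _
  have hnorm n : eLpNorm (r ^ n • Y n) 1 μ = ENNReal.ofReal r ^ n * eLpNorm Z 1 μ := by
    rw [eLpNorm_const_smul, enorm_pow, (hY n).eLpNorm_eq, Real.enorm_of_nonneg hr0]
  have hsum : ∑' n, eLpNorm (r ^ n • Y n) 1 μ ≠ ∞ := by
    simp only [hnorm, ENNReal.tsum_mul_right, ENNReal.tsum_geometric]
    have hr1' : ENNReal.ofReal r < 1 := ENNReal.ofReal_lt_one.2 hr1
    exact ENNReal.mul_ne_top (ENNReal.inv_ne_top.2 (tsub_pos_of_lt hr1').ne')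
      (memLp_one_iff_integrable.2 hZ).eLpNorm_lt_top.ne
  filter_upwards [summable_norm_of_tsum_eLpNorm_ne_top le_rfl hmeas hsum] with ω hω
  simpa [norm_smul, abs_of_nonneg hr0] using hω

theorem norm_backward_iterate_succ_sub_le {E : Type*} [SeminormedAddCommGroup E]
    {f : ℤ → E → E} {ρ : ℝ} (hρ : 0 ≤ ρ) (hf : ∀ t a b, ‖f t a - f t b‖ ≤ ρ * ‖a - b‖)
    {X : ℤ → ℕ → E} {x : E} (hX0 : ∀ t, X t 0 = x) (hX : ∀ t j, X t (j + 1) = f t (X (t - 1) j))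
    (j : ℕ) (t : ℤ) : ‖X t (j + 1) - X t j‖ ≤ ρ ^ j * ‖f (t - j) x - x‖ := by
  induction j generalizing t with
  | zero => simp [hX, hX0]
  | succ j ih =>
    calc ‖X t (j + 2) - X t (j + 1)‖
        ≤ ρ * ‖X (t - 1) (j + 1) - X (t - 1) j‖ := by rw [hX t (j + 1), hX t j]; exact hf _ _ _
      _ ≤ ρ * (ρ ^ j * ‖f (t - 1 - j) x - x‖) := by gcongr; exact ih _
      _ = ρ ^ (j + 1) * ‖f (t - ↑(j + 1)) x - x‖ := by
        rw [pow_succ', mul_assoc, Nat.cast_succ, sub_add_eq_sub_sub, sub_right_comm]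

theorem exists_tendsto_backward_iterate {E : Type*} [NormedAddCommGroup E] [CompleteSpace E]
    {f : ℤ → E → E} {ρ : ℝ} (hρ : 0 ≤ ρ) (hf : ∀ t a b, ‖f t a - f t b‖ ≤ ρ * ‖a - b‖)
    {X : ℤ → ℕ → E} {x : E} (hX0 : ∀ t, X t 0 = x) (hX : ∀ t j, X t (j + 1) = f t (X (t - 1) j))
    (t : ℤ) (hsum : Summable fun j : ℕ => ρ ^ j * ‖f (t - j) x - x‖) :
    ∃ L, Tendsto (X t) atTop (nhds L) :=
  cauchySeq_tendsto_of_complete <| cauchySeq_of_dist_le_of_summable _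
    (fun j => by
      rw [dist_comm, dist_eq_norm]
      exact norm_backward_iterate_succ_sub_le hρ hf hX0 hX j t) hsum

theorem stmt16_general {Ω : Type*} {m : ℕ} {F : MeasurableSpace Ω} {μ : Measure Ω}
    (Fmap : (ℤ → ℝ) → ℝ → EuclideanSpace ℝ (Fin m) → EuclideanSpace ℝ (Fin m))
    (ρ : ℝ) (hρ0 : 0 < ρ) (hρ1 : ρ < 1)
    (hcontr : ∀ w s z₁ z₂, ‖Fmap w s z₁ - Fmap w s z₂‖ ≤ ρ * ‖z₁ - z₂‖)
    (x : EuclideanSpace ℝ (Fin m)) (C : ℝ)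
    (hdrift : ∀ χ s, ‖Fmap χ s x - x‖ ≤ C * (1 + |s|))
    (ε2 : ℤ → Ω → ℝ) (hmeas : ∀ t, Measurable (ε2 t))
    (hident : ∀ t : ℤ, μ.map (ε2 t) = μ.map (ε2 0))
    (hint : Integrable (ε2 0) μ)
    (χ : ℤ → ℤ → ℝ)
    (Xtil : ℤ → ℕ → Ω → EuclideanSpace ℝ (Fin m))
    (hX0 : ∀ t ω, Xtil t 0 ω = x)
    (hXrec : ∀ t : ℤ, ∀ j : ℕ, ∀ ω, Xtil t (j + 1) ω = Fmap (χ t) (ε2 t ω) (Xtil (t - 1) j ω)) :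
    ∀ t : ℤ, ∀ᵐ ω ∂μ, ∃ L : EuclideanSpace ℝ (Fin m),
      Tendsto (fun j => Xtil t j ω) atTop (nhds L) := by
  intro t
  have hident' (j : ℕ) : IdentDistrib (ε2 (t - j)) (ε2 0) μ μ :=
    ⟨(hmeas _).aemeasurable, (hmeas 0).aemeasurable, hident _⟩
  filter_upwards [ae_summable_geometric_mul_norm_of_identDistrib hident' hint hρ0.le hρ1]
    with ω hω
  refine exists_tendsto_backward_iterate (X := fun s j => Xtil s j ω) hρ0.le
    (fun s => hcontr (χ s) (ε2 s ω)) (hX0 · ω) (fun s j => hXrec s j ω) t ?_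
  have hbound : Summable fun j : ℕ => C * (ρ ^ j + ρ ^ j * ‖ε2 (t - j) ω‖) :=
    ((summable_geometric_of_lt_one hρ0.le hρ1).add hω).mul_left C
  refine hbound.of_nonneg_of_le (fun j => by positivity) fun j => ?_
  calc ρ ^ j * ‖Fmap (χ (t - j)) (ε2 (t - j) ω) x - x‖
      ≤ ρ ^ j * (C * (1 + |ε2 (t - j) ω|)) := by gcongr; exact hdrift _ _
    _ = C * (ρ ^ j + ρ ^ j * ‖ε2 (t - j) ω‖) := by rw [Real.norm_eq_abs]; ring

/-- Almost sure convergence of backward iterations of random contractions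
(cf. Diaconis–Freedman): under the contraction and drift conditions on `F`,
the iterates `X̃_j^t` converge a.s. as `j → ∞`. -/
theorem stmt16 {Ω : Type*} {m : ℕ} {F : MeasurableSpace Ω} {μ : Measure Ω}
    [IsProbabilityMeasure μ]
    (Fmap : (ℤ → ℝ) → ℝ → EuclideanSpace ℝ (Fin m) → EuclideanSpace ℝ (Fin m))
    (ρ : ℝ) (hρ0 : 0 < ρ) (hρ1 : ρ < 1)
    (hcontr : ∀ w s z₁ z₂, ‖Fmap w s z₁ - Fmap w s z₂‖ ≤ ρ * ‖z₁ - z₂‖)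
    (x : EuclideanSpace ℝ (Fin m)) (C : ℝ) (hC : 0 < C)
    (hdrift : ∀ χ s, ‖Fmap χ s x - x‖ ≤ C * (1 + |s|))
    (ε2 : ℤ → Ω → ℝ) (hmeas : ∀ t, Measurable (ε2 t))
    (hindep : iIndepFun ε2 μ)
    (hident : ∀ t : ℤ, μ.map (ε2 t) = μ.map (ε2 0))
    (hint : Integrable (ε2 0) μ)
    (χ : ℤ → ℤ → ℝ)
    (Xtil : ℤ → ℕ → Ω → EuclideanSpace ℝ (Fin m))
    (hX0 : ∀ t ω, Xtil t 0 ω = x)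
    (hXrec : ∀ t : ℤ, ∀ j : ℕ, ∀ ω, Xtil t (j + 1) ω = Fmap (χ t) (ε2 t ω) (Xtil (t - 1) j ω)) :
    ∀ t : ℤ, ∀ᵐ ω ∂μ, ∃ L : EuclideanSpace ℝ (Fin m),
      Tendsto (fun j => Xtil t j ω) atTop (nhds L) :=
  stmt16_general (F := F) Fmap ρ hρ0 hρ1 hcontr x C hdrift ε2 hmeas hident hint χ Xtil hX0 hXrec
end
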